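/- (Hadamard global inverse function theorem, as used) Let psi : R^n -> R^n be a smooth proper map whose derivative psi'(x) is invertible at every point x. Then psi is a diffeomorphism of R^n onto R^n. -/

import Mathlib

open Set Metric Filter Topology

namespace Hadamard

variable {E : Type*} [NormedAddCommGroup E] [NormedSpace ℝ E]

/-- straight segment from `y0` to `y`. -/
noncomputable def seg (y0 y : E) (t : ℝ) : E := y0 + t • (y - y0)

lemma seg_zero (y0 y : E) : seg y0 y 0 = y0 := by simp [seg]

lemma seg_one (y0 y : E) : seg y0 y 1 = y := by simp [seg]

lemma seg_self (y0 : E) (t : ℝ) : seg y0 y0 t = y0 := by simp [seg]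

lemma continuous_seg (y0 y : E) : Continuous (seg y0 y) := by
  unfold seg; fun_prop

lemma continuous_seg_y (y0 : E) (t : ℝ) : Continuous (fun y : E => seg y0 y t) := by
  unfold seg; fun_prop

lemma dist_seg_le (y0 y y' : E) {t : ℝ} (ht : t ∈ Icc (0:ℝ) 1) :
    dist (seg y0 y' t) (seg y0 y t) ≤ dist y' y := by
  have : seg y0 y' t - seg y0 y t = t • (y' - y) := by
    simp only [seg]; module
  rw [dist_eq_norm, this, norm_smul, dist_eq_norm]
  have : |t| ≤ 1 := by rw [abs_of_nonneg ht.1]; exact ht.2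
  calc ‖t‖ * ‖y' - y‖ ≤ 1 * ‖y' - y‖ := by
        apply mul_le_mul_of_nonneg_right _ (norm_nonneg _); simpa using this
    _ = ‖y' - y‖ := one_mul _

/-- `M` is a lift of the segment from `f a` to `y` over `[0, t]`, starting at `a`. -/
def IsLift (f : E → E) (a y : E) (t : ℝ) (M : ℝ → E) : Prop :=
  ContinuousOn M (Icc 0 t) ∧ M 0 = a ∧ ∀ s ∈ Icc (0:ℝ) t, f (M s) = seg (f a) y s

lemma lift_unique {f : E → E} (hlh : IsLocalHomeomorph f) {a y : E} {t : ℝ}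
    {M M' : ℝ → E} (h : IsLift f a y t M) (h' : IsLift f a y t M') (ht : 0 ≤ t) :
    EqOn M M' (Icc 0 t) :=
  (T2Space.isSeparatedMap f).eqOn_of_comp_eqOn hlh.isLocallyInjective isPreconnected_Icc
    h.1 h'.1 (fun s hs => by
      simp only [Function.comp_apply, h.2.2 s hs, h'.2.2 s hs])
    (left_mem_Icc.mpr ht) (h.2.1.trans h'.2.1.symm)

lemma IsLift.glue {f : E → E} {a y : E} {b c : ℝ} (hb : 0 ≤ b) (hbc : b ≤ c) {M : ℝ → E}
    (hM : IsLift f a y b M) (e : OpenPartialHomeomorph E E) (hfe : f = ⇑e)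
    (hσ : ∀ s ∈ Icc b c, seg (f a) y s ∈ e.target)
    (hMb : M b = e.symm (seg (f a) y b)) :
    IsLift f a y c (fun t => if t ≤ b then M t else e.symm (seg (f a) y t)) ∧
      (fun t => if t ≤ b then M t else e.symm (seg (f a) y t)) c
        = e.symm (seg (f a) y c) := by
  constructor
  · refine ⟨?_, ?_, ?_⟩
    · apply ContinuousOn.if
      · intro s hs
        have : s = b := by
          have := hs.2
          rw [show {a : ℝ | a ≤ b} = Iic b from rfl, frontier_Iic] at this
          exact this
        subst this; exact hMb
      · apply hM.1.mono
        intro s hs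
        rw [show {a : ℝ | a ≤ b} = Iic b from rfl, closure_Iic] at hs
        exact ⟨hs.1.1, hs.2⟩
      · have hsub : Icc 0 c ∩ closure {a : ℝ | ¬ a ≤ b} ⊆ Icc b c := by
          intro s hs
          have h2 : closure {a : ℝ | ¬ a ≤ b} = Ici b := by
            rw [show {a : ℝ | ¬ a ≤ b} = Ioi b by ext; simp, closure_Ioi]
          rw [h2] at hs
          exact ⟨hs.2, hs.1.2⟩
        exact (e.continuousOn_symm.comp (continuous_seg (f a) y).continuousOn
          (fun s hs => hσ s hs)).mono hsub
    · simp only [if_pos hb]; exact hM.2.1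
    · intro s hs
      by_cases hsb : s ≤ b
      · simp only [if_pos hsb]; exact hM.2.2 s ⟨hs.1, hsb⟩
      · simp only [if_neg hsb]
        have h2 := e.right_inv (hσ s ⟨le_of_not_ge hsb, hs.2⟩)
        rw [← hfe] at h2
        exact h2
  · by_cases hcb : c ≤ b
    · have : b = c := le_antisymm hbc hcb
      subst this
      simpa using hMb
    · simp only [if_neg hcb]


/-- The key induction: lifts of segments exist, with chart data uniform in a
neighborhood of the endpoint parameter. -/
lemma key {f : E → E} (hlh : IsLocalHomeomorph f)
    (hproper : ∀ K : Set E, IsCompact K → IsCompact (f ⁻¹' K)) (a y : E) :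
    ∃ N ∈ 𝓝 y, ∃ e : OpenPartialHomeomorph E E, f = ⇑e ∧ ∀ y' ∈ N,
      seg (f a) y' 1 ∈ e.target ∧
        ∃ M, IsLift f a y' 1 M ∧ M 1 = e.symm (seg (f a) y' 1) := by
  set P : ℝ → Prop := fun t => ∃ N ∈ 𝓝 y, ∃ e : OpenPartialHomeomorph E E, f = ⇑e ∧ ∀ y' ∈ N,
      seg (f a) y' t ∈ e.target ∧
        ∃ M, IsLift f a y' t M ∧ M t = e.symm (seg (f a) y' t) with hP
  -- base case
  have base : P 0 := by
    obtain ⟨e0, ha0, hfe0⟩ := hlh a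
    refine ⟨univ, univ_mem, e0, hfe0, fun y' _ => ?_⟩
    have htar : seg (f a) y' 0 ∈ e0.target := by
      rw [seg_zero, hfe0]; exact e0.map_source ha0
    refine ⟨htar, fun _ => a, ⟨continuousOn_const, rfl, fun s hs => ?_⟩, ?_⟩
    · have : s = 0 := le_antisymm hs.2 hs.1
      rw [this, seg_zero]
    · rw [seg_zero, hfe0]
      exact (e0.left_inv ha0).symm
  set T : Set ℝ := {t | t ∈ Icc (0:ℝ) 1 ∧ P t} with hT
  have hT0 : (0:ℝ) ∈ T := ⟨⟨le_refl 0, zero_le_one⟩, base⟩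
  have hTne : T.Nonempty := ⟨0, hT0⟩
  have bdd : BddAbove T := ⟨1, fun t ht => ht.1.2⟩
  set τ : ℝ := sSup T with hτ
  have hτ0 : 0 ≤ τ := le_csSup bdd hT0
  have hτ1 : τ ≤ 1 := csSup_le hTne (fun t ht => ht.1.2)
  -- Step A : P τ
  have hPτ : P τ := by
    by_cases hτT : τ ∈ T
    · exact hτT.2
    -- τ ∉ T; in particular τ > 0 and we can approximate from below
    have hτpos : 0 < τ := lt_of_le_of_ne hτ0 (fun h => hτT (h ▸ hT0))
    have hseq : ∀ k : ℕ, ∃ t ∈ T, τ - 1/(k+1) < t := fun k =>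
      exists_lt_of_lt_csSup hTne (by
        have : (0:ℝ) < 1/(k+1) := by positivity
        linarith)
    choose t ht htlt using hseq
    have htle : ∀ k, t k ≤ τ := fun k => le_csSup bdd (ht k)
    have httend : Tendsto t atTop (𝓝 τ) := by
      have h1 : Tendsto (fun k : ℕ => τ - 1/(k+1)) atTop (𝓝 τ) := by
        have := tendsto_one_div_add_atTop_nhds_zero_nat (𝕜 := ℝ)
        simpa using tendsto_const_nhds.sub this
      exact tendsto_of_tendsto_of_tendsto_of_le_of_le h1 tendsto_const_nhds
        (fun k => (htlt k).le) htle
    -- chart data at each t k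
    have hPk : ∀ k : ℕ, P (t k) := fun k => (ht k).2
    rw [hP] at hPk
    choose N hN e hfe hmem using hPk
    -- the canonical lift endpoints at y
    set x : ℕ → E := fun k => (e k).symm (seg (f a) y (t k)) with hx
    have hytar : ∀ k, seg (f a) y (t k) ∈ (e k).target :=
      fun k => (hmem k y (mem_of_mem_nhds (hN k))).1
    have hfx : ∀ k, f (x k) = seg (f a) y (t k) := fun k => by
      have := (e k).right_inv (hytar k)
      rw [← hfe k] at this
      exact this
    -- cluster point via properness
    have hC : IsCompact (f ⁻¹' (seg (f a) y '' Icc 0 1)) :=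
      hproper _ (isCompact_Icc.image (continuous_seg (f a) y))
    have hxC : ∀ k, x k ∈ f ⁻¹' (seg (f a) y '' Icc 0 1) := fun k => by
      rw [mem_preimage, hfx k]
      exact mem_image_of_mem _ ⟨(ht k).1.1, (ht k).1.2⟩
    obtain ⟨p, _, φ, hφmono, hφconv⟩ := hC.tendsto_subseq hxC
    have htφ : Tendsto (fun k => t (φ k)) atTop (𝓝 τ) :=
      httend.comp hφmono.tendsto_atTop
    have hfp : f p = seg (f a) y τ := by
      have h1 : Tendsto (fun k => f (x (φ k))) atTop (𝓝 (f p)) :=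
        (hlh.continuous.tendsto p).comp hφconv
      have h2 : Tendsto (fun k => f (x (φ k))) atTop (𝓝 (seg (f a) y τ)) := by
        simp only [hfx]
        exact ((continuous_seg (f a) y).tendsto τ).comp htφ
      exact tendsto_nhds_unique h1 h2
    -- chart at p
    obtain ⟨e', hp', hfe'⟩ := hlh p
    have hpt : seg (f a) y τ ∈ e'.target := by
      rw [← hfp, hfe']; exact e'.map_source hp'
    -- choose t* < τ with σ_y([t*, τ]) ⊆ e'.target
    have hopenpre : IsOpen ((seg (f a) y) ⁻¹' e'.target) :=
      e'.open_target.preimage (continuous_seg (f a) y)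
    obtain ⟨δ, hδ, hball⟩ := Metric.isOpen_iff.1 hopenpre τ hpt
    set tstar : ℝ := max 0 (τ - δ/2) with htstar
    have htstarlt : tstar < τ := by
      apply max_lt hτpos; linarith
    have hKsub : ∀ s ∈ Icc tstar τ, seg (f a) y s ∈ e'.target := by
      intro s hs
      apply hball
      rw [mem_ball, Real.dist_eq, abs_of_nonpos (by linarith [hs.2])]
      have : τ - δ/2 ≤ tstar := le_max_right _ _
      have := hs.1
      linarith
    -- margin ε
    have hKcpt : IsCompact (seg (f a) y '' Icc tstar τ) :=
      isCompact_Icc.image (continuous_seg (f a) y)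
    obtain ⟨ε, hε, hthick⟩ := hKcpt.exists_thickening_subset_open e'.open_target
      (by rintro _ ⟨s, hs, rfl⟩; exact hKsub s hs)
    -- pick good index
    have hev1 : ∀ᶠ k in atTop, tstar < t (φ k) := htφ.eventually (eventually_gt_nhds htstarlt)
    have hev2 : ∀ᶠ k in atTop, x (φ k) ∈ e'.source :=
      hφconv.eventually (e'.open_source.mem_nhds hp')
    obtain ⟨k₀, hk1, hk2⟩ := (hev1.and hev2).exists
    set j : ℕ := φ k₀ with hj
    -- neighborhood of y
    have hcontsymm : ContinuousAt (fun y' : E => (e j).symm (seg (f a) y' (t j))) y := by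
      apply ContinuousAt.comp _ (continuous_seg_y (f a) (t j)).continuousAt
      apply (e j).symm.continuousAt
      rw [OpenPartialHomeomorph.symm_source]
      exact hytar j
    have hNs : (fun y' : E => (e j).symm (seg (f a) y' (t j))) ⁻¹' e'.source ∈ 𝓝 y :=
      hcontsymm.preimage_mem_nhds (e'.open_source.mem_nhds hk2)
    refine ⟨N j ∩ ((fun y' : E => (e j).symm (seg (f a) y' (t j))) ⁻¹' e'.source) ∩ ball y ε,
      inter_mem (inter_mem (hN j) hNs) (ball_mem_nhds y hε), e', hfe', ?_⟩
    rintro y' ⟨⟨hy'N, hy'pre⟩, hy'ball⟩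
    have hb0 : 0 ≤ t j := (ht j).1.1
    have hbτ : t j ≤ τ := htle j
    -- σ_{y'} on [t j, τ] lands in e'.target
    have hσ' : ∀ s ∈ Icc (t j) τ, seg (f a) y' s ∈ e'.target := by
      intro s hs
      apply hthick
      rw [mem_thickening_iff]
      refine ⟨seg (f a) y s, mem_image_of_mem _ ⟨le_trans hk1.le hs.1, hs.2⟩, ?_⟩
      calc dist (seg (f a) y' s) (seg (f a) y s) ≤ dist y' y :=
            dist_seg_le _ _ _ ⟨le_trans hb0 hs.1, le_trans hs.2 hτ1⟩
        _ < ε := mem_ball.1 hy'ball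
    obtain ⟨hy'tar, M, hM, hMb⟩ := hmem j y' hy'N
    have hMsrc : M (t j) ∈ e'.source := by rw [hMb]; exact hy'pre
    have hMb' : M (t j) = e'.symm (seg (f a) y' (t j)) := by
      have hfM : f (M (t j)) = seg (f a) y' (t j) :=
        hM.2.2 (t j) ⟨hb0, le_refl _⟩
      rw [← hfM, hfe']
      exact (e'.left_inv hMsrc).symm
    obtain ⟨hlift, hend⟩ := hM.glue hb0 hbτ e' hfe' hσ' hMb'
    exact ⟨hσ' τ ⟨hbτ, le_refl τ⟩, _, hlift, hend⟩
  -- Step B : τ = 1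
  have hτeq : τ = 1 := by
    by_contra hne
    have hτlt : τ < 1 := lt_of_le_of_ne hτ1 hne
    obtain ⟨N, hN, e, hfe, hmem⟩ := hPτ
    have hytar : seg (f a) y τ ∈ e.target := (hmem y (mem_of_mem_nhds hN)).1
    have hopenpre : IsOpen ((seg (f a) y) ⁻¹' e.target) :=
      e.open_target.preimage (continuous_seg (f a) y)
    obtain ⟨δ, hδ, hball⟩ := Metric.isOpen_iff.1 hopenpre τ hytar
    set τ' : ℝ := min 1 (τ + δ/2) with hτ'
    have hττ' : τ < τ' := lt_min hτlt (by linarith)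
    have hτ'le : τ' ≤ 1 := min_le_left _ _
    have hKsub : ∀ s ∈ Icc τ τ', seg (f a) y s ∈ e.target := by
      intro s hs
      apply hball
      rw [mem_ball, Real.dist_eq, abs_of_nonneg (by linarith [hs.1])]
      have : τ' ≤ τ + δ/2 := min_le_right _ _
      have := hs.2
      linarith
    have hKcpt : IsCompact (seg (f a) y '' Icc τ τ') :=
      isCompact_Icc.image (continuous_seg (f a) y)
    obtain ⟨ε, hε, hthick⟩ := hKcpt.exists_thickening_subset_open e.open_target
      (by rintro _ ⟨s, hs, rfl⟩; exact hKsub s hs)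
    have hPτ' : P τ' := by
      refine ⟨N ∩ ball y ε, inter_mem hN (ball_mem_nhds y hε), e, hfe, ?_⟩
      rintro y' ⟨hy'N, hy'ball⟩
      have hσ' : ∀ s ∈ Icc τ τ', seg (f a) y' s ∈ e.target := by
        intro s hs
        apply hthick
        rw [mem_thickening_iff]
        refine ⟨seg (f a) y s, mem_image_of_mem _ hs, ?_⟩
        calc dist (seg (f a) y' s) (seg (f a) y s) ≤ dist y' y :=
              dist_seg_le _ _ _ ⟨le_trans hτ0 hs.1, le_trans hs.2 hτ'le⟩
          _ < ε := mem_ball.1 hy'ball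
      obtain ⟨hy'tar, M, hM, hMb⟩ := hmem y' hy'N
      obtain ⟨hlift, hend⟩ := hM.glue hτ0 hττ'.le e hfe hσ' hMb
      exact ⟨hσ' τ' ⟨hττ'.le, le_refl τ'⟩, _, hlift, hend⟩
    have : τ' ∈ T := ⟨⟨le_trans hτ0 hττ'.le, hτ'le⟩, hPτ'⟩
    exact absurd (le_csSup bdd this) (not_le.mpr hττ')
  rw [hτeq] at hPτ
  exact hPτ


variable [CompleteSpace E] [FiniteDimensional ℝ E]

theorem main {ψ : E → E} (hsmooth : ContDiff ℝ (⊤ : ℕ∞) ψ)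
    (hinv : ∀ x, Function.Bijective (fderiv ℝ ψ x))
    (hproper : ∀ K : Set E, IsCompact K → IsCompact (ψ ⁻¹' K)) :
    ∃ φ : E → E,
      ContDiff ℝ (⊤ : ℕ∞) φ ∧ Function.LeftInverse φ ψ ∧ Function.RightInverse φ ψ := by
  -- derivative as continuous linear equivalence
  have hd : ∀ x : E, Function.Bijective ⇑((fderiv ℝ ψ x : E →ₗ[ℝ] E)) := fun x => hinv x
  let d : E → (E ≃L[ℝ] E) := fun x =>
    LinearEquiv.toContinuousLinearEquiv
      (LinearEquiv.ofBijective ((fderiv ℝ ψ x) : E →ₗ[ℝ] E) (hd x))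
  have hF : ∀ x, HasFDerivAt ψ ((d x : E ≃L[ℝ] E) : E →L[ℝ] E) x := by
    intro x
    have h1 : ((d x : E ≃L[ℝ] E) : E →L[ℝ] E) = fderiv ℝ ψ x := by
      ext v; rfl
    rw [h1]
    exact (hsmooth.differentiable (by simp) x).hasFDerivAt
  have hCA : ∀ x : E, ContDiffAt ℝ (⊤ : ℕ∞) ψ x := fun x => hsmooth.contDiffAt
  have hlh : IsLocalHomeomorph ψ := fun x =>
    ⟨(hCA x).toOpenPartialHomeomorph ψ (hF x) (by simp),
      ContDiffAt.mem_toOpenPartialHomeomorph_source (hCA x) (hF x) (by simp),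
      (ContDiffAt.toOpenPartialHomeomorph_coe (hCA x) (hF x) (by simp)).symm⟩
  -- lifting data from the key lemma, basepoint 0
  have hkey := fun y : E => Hadamard.key hlh hproper 0 y
  choose N hN e hfe hmain using hkey
  set φ : E → E := fun y => (e y).symm y with hφ
  have hseg1 : ∀ y' : E, seg (ψ 0) y' 1 = y' := fun y' => seg_one _ _
  have hytar : ∀ y : E, y ∈ (e y).target := fun y => by
    have := (hmain y y (mem_of_mem_nhds (hN y))).1
    rwa [hseg1] at this
  have hφy : ∀ y, ψ (φ y) = y := fun y => by
    show ψ ((e y).symm y) = y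
    have h2 := (e y).right_inv (hytar y)
    rw [← hfe y] at h2
    exact h2
  -- local formula : φ = (e y).symm on N y
  have hloc : ∀ y : E, ∀ y' ∈ N y, φ y' = (e y).symm y' := by
    intro y y' hy'
    obtain ⟨ht₁, M, hM, hMe⟩ := hmain y y' hy'
    obtain ⟨ht₂, M', hM', hMe'⟩ := hmain y' y' (mem_of_mem_nhds (hN y'))
    have huniq := lift_unique hlh hM' hM zero_le_one (right_mem_Icc.mpr zero_le_one)
    rw [hseg1] at hMe hMe'
    show (e y').symm y' = (e y).symm y'
    rw [← hMe, ← hMe']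
    exact huniq
  have hcont : Continuous φ := by
    rw [continuous_iff_continuousAt]
    intro y
    have hca : ContinuousAt (⇑(e y).symm) y := by
      apply (e y).symm.continuousAt
      rw [OpenPartialHomeomorph.symm_source]
      exact hytar y
    exact hca.congr (by filter_upwards [hN y] with y' hy' using (hloc y y' hy').symm)
  -- left inverse via clopen argument
  haveI : PreconnectedSpace E := ⟨(convex_univ : Convex ℝ (univ : Set E)).isPreconnected⟩
  have hU : {x : E | φ (ψ x) = x} = univ := by
    apply IsClopen.eq_univ
    · constructor
      · exact isClosed_eq (hcont.comp hlh.continuous) continuous_id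
      · rw [isOpen_iff_forall_mem_open]
        intro x hx
        obtain ⟨e', hx', hfe'⟩ := hlh x
        refine ⟨e'.source ∩ (fun x' => φ (ψ x')) ⁻¹' e'.source, ?_, ?_, hx', ?_⟩
        · rintro x' ⟨hx'1, hx'2⟩
          have h1 : ψ (φ (ψ x')) = ψ x' := hφy (ψ x')
          have h2 : (e' : E → E) (φ (ψ x')) = (e' : E → E) x' := by
            rw [← hfe']; exact h1
          exact e'.injOn hx'2 hx'1 h2
        · exact e'.open_source.inter
            (e'.open_source.preimage (hcont.comp hlh.continuous))
        · exact mem_preimage.mpr (by rw [show φ (ψ x) = x from hx]; exact hx')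
    · -- 0 is in the set
      refine ⟨0, ?_⟩
      obtain ⟨ht₁, M, hM, hMe⟩ := hmain (ψ 0) (ψ 0) (mem_of_mem_nhds (hN (ψ 0)))
      have hconst : IsLift ψ 0 (ψ 0) 1 (fun _ => (0:E)) :=
        ⟨continuousOn_const, rfl, fun s _ => (seg_self (ψ 0) s).symm⟩
      have huniq := lift_unique hlh hM hconst zero_le_one (right_mem_Icc.mpr zero_le_one)
      rw [hseg1] at hMe
      show (e (ψ 0)).symm (ψ 0) = 0
      rw [← hMe]
      exact huniq
  have hleft : Function.LeftInverse φ ψ := fun x => by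
    have : x ∈ {x : E | φ (ψ x) = x} := hU ▸ mem_univ x
    exact this
  have hinj : Function.Injective ψ := hleft.injective
  -- smoothness of the inverse
  have hφsmooth : ContDiff ℝ (⊤ : ℕ∞) φ := by
    rw [contDiff_iff_contDiffAt]
    intro y
    set x := φ y with hxdef
    have hyx : ψ x = y := hφy y
    have hstrict := (hCA x).hasStrictFDerivAt' (hF x) (by simp)
    have hLI := (hCA x).to_localInverse (f' := d x) (hF x) (by simp)
    have hev : φ =ᶠ[𝓝 (ψ x)] ((hCA x).localInverse (hF x) (by simp)) := by
      have hri := hstrict.eventually_right_inverse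
      filter_upwards [hri] with z hz
      exact hinj (by rw [hφy z]; exact hz.symm)
    rw [← hyx]
    exact hLI.congr_of_eventuallyEq hev
  exact ⟨φ, hφsmooth, hleft, fun y => hφy y⟩

end Hadamard

/-- Hadamard's global inverse function theorem: a smooth proper map
`ψ : ℝⁿ → ℝⁿ` with everywhere invertible derivative is a diffeomorphism. -/
theorem stmt7 {n : ℕ}
    (ψ : EuclideanSpace ℝ (Fin n) → EuclideanSpace ℝ (Fin n))
    (hsmooth : ContDiff ℝ (⊤ : ℕ∞) ψ)
    (hinv : ∀ x, Function.Bijective (fderiv ℝ ψ x))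
    (hproper : ∀ K : Set (EuclideanSpace ℝ (Fin n)), IsCompact K → IsCompact (ψ ⁻¹' K)) :
    ∃ φ : EuclideanSpace ℝ (Fin n) → EuclideanSpace ℝ (Fin n),
      ContDiff ℝ (⊤ : ℕ∞) φ ∧ Function.LeftInverse φ ψ ∧ Function.RightInverse φ ψ :=
  Hadamard.main hsmooth hinv hproper
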